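/- arXiv:2504.14937 — 3 statements merged into one kernel-verified Lean document; each statement's English description precedes it below -/
import Mathlib

section
/- Let G be a DAG and U, V distinct vertices such that every directed path between U and V in G has length at most 1. Let H be the graph obtained from G by contracting U and V into a node X_UV, and let G' be the one-step canonical DAG for this contraction. Then: (i) the parents of X_UV in H equal the parents of U in G', and the parents of V in G' equal the parents of U in G' together with U; (ii) the children of X_UV in H equal the children of V in G', and the children of U in G' equal the children of V in G' together with V; (iii) the non-descendants of X_UV in H equal the non-descendants of U in G', and the non-descendants of V in G' equal the non-descendants of U in G' together with U. -/
namespace CausalDAGSummary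

variable {α : Type*}

/-- A directed graph (edge relation) is a DAG when it has no directed cycle. -/
def IsDAG (E : α → α → Prop) : Prop := ∀ a, ¬ Relation.TransGen E a a

/-- The edge relation of the graph `H` obtained by contracting the two distinct
vertices `u` and `v` into the single node `X_UV`: the merged node is represented by
`u`, the vertex `v` is removed, the merged node inherits all edges of `u` and of `v`
to/from the remaining vertices, any edge between `u` and `v` is removed, and edges
among the other vertices are kept. -/
def contractE (E : α → α → Prop) (u v : α) : α → α → Prop := fun a b =>
  a ≠ v ∧ b ≠ v ∧ a ≠ b ∧
    ((a = u ∧ (E u b ∨ E v b)) ∨ (b = u ∧ (E a u ∨ E a v)) ∨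
      (a ≠ u ∧ b ≠ u ∧ E a b))

/-- The edge relation of the one-step canonical DAG `G'` for the contraction of `u`
and `v` in `G`: the edges of `G` together with the edge `(u,v)`, edges `(P,u)` for
every parent `P` of `v`, edges `(P,v)` for every parent `P` of `u`, edges `(u,C)` for
every child `C` of `v`, and edges `(v,C)` for every child `C` of `u` (edges join
distinct vertices). -/
def canonE (E : α → α → Prop) (u v : α) : α → α → Prop := fun a b =>
  a ≠ b ∧
    (E a b ∨ (a = u ∧ b = v) ∨ (b = u ∧ E a v) ∨ (b = v ∧ E a u) ∨
      (a = u ∧ E v b) ∨ (a = v ∧ E u b))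

/-- The set `π(t)` of parents of `t`. -/
def parents (E : α → α → Prop) (t : α) : Set α := {w | E w t}

/-- The set `ch(t)` of children of `t`. -/
def children (E : α → α → Prop) (t : α) : Set α := {w | E t w}

/-- The set `Dsc(t)` of descendants of `t` (vertices reachable from `t` by a directed
path, including `t` itself). -/
def desc (E : α → α → Prop) (t : α) : Set α := {w | Relation.ReflTransGen E t w}

/-- The set `NDsc(t)` of non-descendants of `t`. -/
def ndesc (E : α → α → Prop) (t : α) : Set α := {w | ¬ Relation.ReflTransGen E t w}

/-! Parents and children are bookkeeping with the definitions. For descendants, the map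
`mergeVertex u v`, sending `v` to `u` and fixing every other vertex, maps every edge of `G'`
to an edge of `H` or to a single vertex, and `H ⊆ G'`; hence `u` reaches the same vertices
`w ≠ v` in `H` and in `G'`. In `G'` there is the edge `u → v` and every other child of `u`
is a child of `v`, so `v` reaches what `u` reaches, except possibly `u`. Finally `v` does not
reach `u` in `G'`: no child of `v` in `G'` reaches `u` or `v` in `G` (by acyclicity and the
absence of paths of length at least two between `u` and `v`), and this property is preserved
along edges of `G'`, which away from the ancestors of `u` and `v` are edges of `G`. -/

open Relation

variable {E : α → α → Prop} {u v : α}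

theorem IsDAG.irrefl (hG : IsDAG E) (a : α) : ¬ E a a := fun h => hG a (.single h)

theorem canonE_left_right (huv : u ≠ v) : canonE E u v u v :=
  ⟨huv, Or.inr (Or.inl ⟨rfl, rfl⟩)⟩

theorem contractE_le_canonE : contractE E u v ≤ canonE E u v := by
  rintro a b ⟨-, -, hab, h⟩
  exact ⟨hab, by grind⟩

theorem contractE_of_canonE {a b : α} (ha : a ≠ v) (hb : b ≠ v) (h : canonE E u v a b) :
    contractE E u v a b :=
  let ⟨hab, h⟩ := h
  ⟨ha, hb, hab, by grind⟩

open Classical in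
noncomputable def mergeVertex (u v a : α) : α := if a = v then u else a

theorem mergeVertex_self : mergeVertex u v v = u := if_pos rfl

theorem mergeVertex_of_ne {a : α} (ha : a ≠ v) : mergeVertex u v a = a := if_neg ha

theorem rel_of_canonE_of_not_reflTransGen {w c : α} (h : canonE E u v w c)
    (hwu : ¬ ReflTransGen E w u) (hwv : ¬ ReflTransGen E w v) : E w c := by
  rcases h.2 with h | ⟨rfl, -⟩ | ⟨-, h⟩ | ⟨-, h⟩ | ⟨rfl, -⟩ | ⟨rfl, -⟩
  · exact h
  · exact absurd .refl hwu
  · exact absurd (.single h) hwv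
  · exact absurd (.single h) hwu
  · exact absurd .refl hwu
  · exact absurd .refl hwv

theorem not_reflTransGen_of_reflTransGen_canonE {c w : α} (h : ReflTransGen (canonE E u v) c w)
    (hc : ¬ ReflTransGen E c u ∧ ¬ ReflTransGen E c v) :
    ¬ ReflTransGen E w u ∧ ¬ ReflTransGen E w v := by
  induction h with
  | refl => exact hc
  | tail _ hbw ih =>
    have hbw := rel_of_canonE_of_not_reflTransGen hbw ih.1 ih.2
    exact ⟨fun h => ih.1 (h.head hbw), fun h => ih.2 (h.head hbw)⟩

theorem not_reflTransGen_of_canonE_right (hG : IsDAG E)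
    (hpath : ¬ ∃ w, E u w ∧ TransGen E w v) (hvu : ¬ TransGen E v u) {c : α}
    (hc : canonE E u v v c) : ¬ ReflTransGen E c u ∧ ¬ ReflTransGen E c v := by
  have hvc : E v c ∨ E u c := by
    rcases hc.2 with h | ⟨-, rfl⟩ | ⟨-, h⟩ | ⟨rfl, -⟩ | ⟨-, h⟩ | ⟨-, h⟩
    · exact .inl h
    · exact absurd rfl hc.1
    · exact absurd h (hG.irrefl v)
    · exact absurd rfl hc.1
    · exact .inl h
    · exact .inr h
  rcases hvc with h | h
  · exact ⟨fun hcu => hvu (.head' h hcu), fun hcv => hG v (.head' h hcv)⟩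
  · refine ⟨fun hcu => hG u (.head' h hcu), fun hcv => hpath ⟨c, h, ?_⟩⟩
    exact (reflTransGen_iff_eq_or_transGen.1 hcv).resolve_left hc.1

theorem not_reflTransGen_canonE_right_left (hG : IsDAG E) (huv : u ≠ v)
    (hpath : ¬ ∃ w, E u w ∧ TransGen E w v) (hvu : ¬ TransGen E v u) :
    ¬ ReflTransGen (canonE E u v) v u := by
  intro h
  rcases h.cases_head with hvu_eq | ⟨c, hvc, hcu⟩
  · exact huv hvu_eq.symm
  · exact (not_reflTransGen_of_reflTransGen_canonE hcu
      (not_reflTransGen_of_canonE_right hG hpath hvu hvc)).1 .refl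

section

variable (hu : ¬ E u u) (hv : ¬ E v v) (huv : u ≠ v) (hvu : ¬ E v u)
include hu hv huv hvu

theorem parents_contractE_eq :
    parents (contractE E u v) u = parents (canonE E u v) u := by
  ext a; simp only [parents, contractE, canonE, Set.mem_ofPred_eq]
  grind

theorem parents_canonE_right_eq :
    parents (canonE E u v) v = insert u (parents (canonE E u v) u) := by
  ext a; simp only [parents, canonE, Set.mem_ofPred_eq, Set.mem_insert_iff]
  grind

theorem children_contractE_eq :
    children (contractE E u v) u = children (canonE E u v) v := by
  ext a; simp only [children, contractE, canonE, Set.mem_ofPred_eq]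
  grind

theorem children_canonE_left_eq :
    children (canonE E u v) u = insert v (children (canonE E u v) v) := by
  ext a; simp only [children, canonE, Set.mem_ofPred_eq, Set.mem_insert_iff]
  grind

theorem reflTransGen_contractE_mergeVertex_of_canonE {a b : α} (hab : canonE E u v a b) :
    ReflTransGen (contractE E u v) (mergeVertex u v a) (mergeVertex u v b) := by
  by_cases ha : a = v <;> by_cases hb : b = v
  · exact absurd (ha.trans hb.symm) hab.1
  · subst a
    have hub : b ∈ children (contractE E u v) u := children_contractE_eq hu hv huv hvu ▸ hab
    rw [mergeVertex_self, mergeVertex_of_ne hb]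
    exact .single hub
  · subst b
    rw [mergeVertex_of_ne ha, mergeVertex_self]
    by_cases hau : a = u
    · rw [hau]
    have hav : a ∈ parents (canonE E u v) v := hab
    rw [parents_canonE_right_eq hu hv huv hvu, Set.mem_insert_iff,
      ← parents_contractE_eq hu hv huv hvu] at hav
    exact .single (hav.resolve_left hau)
  · rw [mergeVertex_of_ne ha, mergeVertex_of_ne hb]
    exact .single (contractE_of_canonE ha hb hab)

theorem reflTransGen_canonE_left_iff {w : α} (hw : w ≠ v) :
    ReflTransGen (canonE E u v) u w ↔ ReflTransGen (contractE E u v) u w := by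
  refine ⟨fun h => ?_, ReflTransGen.mono contractE_le_canonE _ _⟩
  have := ReflTransGen.lift' (mergeVertex u v)
    (fun _ _ => reflTransGen_contractE_mergeVertex_of_canonE hu hv huv hvu) _ _ h
  rwa [Function.onFun, mergeVertex_of_ne huv, mergeVertex_of_ne hw] at this

theorem reflTransGen_canonE_right_iff (hvu_canon : ¬ ReflTransGen (canonE E u v) v u)
    {w : α} :
    ReflTransGen (canonE E u v) v w ↔ w ≠ u ∧ ReflTransGen (canonE E u v) u w := by
  refine ⟨fun h => ⟨by rintro rfl; exact hvu_canon h, h.head (canonE_left_right huv)⟩, ?_⟩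
  rintro ⟨hwu, h⟩
  rcases h.cases_head with huw | ⟨b, hub, hbw⟩
  · exact absurd huw.symm hwu
  have hb : b ∈ insert v (children (canonE E u v) v) :=
    children_canonE_left_eq hu hv huv hvu ▸ hub
  rcases hb with rfl | hvb
  · exact hbw
  · exact hbw.head hvb

end

theorem contraction_parents_children_ndesc_general {α : Type*}
    (E : α → α → Prop) (hG : IsDAG E) (u v : α) (huv : u ≠ v)
    (hpath : (¬ ∃ w, E u w ∧ Relation.TransGen E w v) ∧
      (¬ ∃ w, E v w ∧ Relation.TransGen E w u))
    (hvu : ¬ E v u) :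
    (parents (contractE E u v) u = parents (canonE E u v) u ∧
        parents (canonE E u v) v = insert u (parents (canonE E u v) u)) ∧
      (children (contractE E u v) u = children (canonE E u v) v ∧
        children (canonE E u v) u = insert v (children (canonE E u v) v)) ∧
      ({w | w ≠ v ∧ ¬ Relation.ReflTransGen (contractE E u v) u w}
            = ndesc (canonE E u v) u ∧
        ndesc (canonE E u v) v = insert u (ndesc (canonE E u v) u)) := by
  have hu := hG.irrefl u
  have hv := hG.irrefl v
  have hno_path : ¬ TransGen E v u := fun h => by
    obtain ⟨w, hvw, hwu⟩ := TransGen.head'_iff.1 h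
    rcases reflTransGen_iff_eq_or_transGen.1 hwu with rfl | hwu
    · exact hvu hvw
    · exact hpath.2 ⟨w, hvw, hwu⟩
  have hvu_canon := not_reflTransGen_canonE_right_left hG huv hpath.1 hno_path
  refine ⟨⟨parents_contractE_eq hu hv huv hvu, parents_canonE_right_eq hu hv huv hvu⟩,
    ⟨children_contractE_eq hu hv huv hvu, children_canonE_left_eq hu hv huv hvu⟩, ?_, ?_⟩
  · ext w
    by_cases hw : w = v
    · subst hw
      simp [ndesc, ReflTransGen.single (canonE_left_right huv)]
    · simp [ndesc, hw, reflTransGen_canonE_left_iff hu hv huv hvu hw]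
  · ext w
    simp only [ndesc, Set.mem_ofPred_eq, Set.mem_insert_iff,
      reflTransGen_canonE_right_iff hu hv huv hvu hvu_canon]
    tauto

theorem contraction_parents_children_ndesc {α : Type*} [Fintype α]
    (E : α → α → Prop) (hG : IsDAG E) (u v : α) (huv : u ≠ v)
    (hpath : (¬ ∃ w, E u w ∧ Relation.TransGen E w v) ∧
      (¬ ∃ w, E v w ∧ Relation.TransGen E w u))
    (hvu : ¬ E v u) :
    (parents (contractE E u v) u = parents (canonE E u v) u ∧
        parents (canonE E u v) v = insert u (parents (canonE E u v) u)) ∧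
      (children (contractE E u v) u = children (canonE E u v) v ∧
        children (canonE E u v) u = insert v (children (canonE E u v) v)) ∧
      ({w | w ≠ v ∧ ¬ Relation.ReflTransGen (contractE E u v) u w}
            = ndesc (canonE E u v) u ∧
        ndesc (canonE E u v) v = insert u (ndesc (canonE E u v) u)) :=
  contraction_parents_children_ndesc_general E hG u v huv hpath hvu

end CausalDAGSummary
end

section
/- Let G be a DAG and U, V distinct vertices such that every directed path between U and V in G has length at most 1; let H be the graph obtained from G by contracting U and V into a node X_UV, and let G' be the one-step canonical DAG for this contraction. Let T be a vertex of G with T not in {U,V} and T not a child of U or of V in G. Then: (i) the parents of T in G' equal the parents of T in H; (ii) the non-descendants of T in G' with U and V removed equal the non-descendants of T in H with X_UV removed; and (iii) both U and V are non-descendants of T in G' if and only if X_UV is a non-descendant of T in H. -/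
namespace CausalDAGSummary

variable {α : Type*}

/-!
Every edge of the contraction `H` is an edge of `G'`, and collapsing `v` onto `u` sends
every edge of `G'` to an edge of `H` or to a loop. Hence, for vertices other than `v`,
reachability in `H` and in `G'` coincide, and reaching `v` in `G'` means reaching `X_UV`
in `H`. Parents of a vertex `T ∉ {u, v}` that is a child of neither `u` nor `v` are its
parents in `G` in both graphs.
-/

section Contraction

variable (E : α → α → Prop) {u v : α}

theorem canonE_of_contractE {a b : α} (h : contractE E u v a b) : canonE E u v a b := by
  obtain ⟨-, -, hab, ⟨rfl, h | h⟩ | ⟨rfl, h | h⟩ | ⟨-, -, h⟩⟩ := h <;>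
    simp [canonE, hab, h]

theorem reflGen_contractE_update_of_canonE [DecidableEq α] (huv : u ≠ v) {a b : α}
    (h : canonE E u v a b) :
    Relation.ReflGen (contractE E u v) (Function.update id v u a)
      (Function.update id v u b) := by
  obtain ⟨hab, h⟩ := h
  by_cases hav : a = v <;> by_cases hbv : b = v <;>
    by_cases hau : a = u <;> by_cases hbu : b = u <;>
    simp_all [Relation.reflGen_iff, contractE] <;> tauto

theorem reflTransGen_contractE_of_canonE [DecidableEq α] (huv : u ≠ v) {a b : α}
    (h : Relation.ReflTransGen (canonE E u v) a b) :
    Relation.ReflTransGen (contractE E u v) (Function.update id v u a)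
      (Function.update id v u b) :=
  Relation.ReflTransGen.lift' (Function.update id v u)
    (fun _ _ hab => (reflGen_contractE_update_of_canonE E huv hab).to_reflTransGen) _ _ h

theorem reflTransGen_canonE_of_contractE {a b : α}
    (h : Relation.ReflTransGen (contractE E u v) a b) :
    Relation.ReflTransGen (canonE E u v) a b :=
  Relation.ReflTransGen.mono (fun _ _ => canonE_of_contractE E) _ _ h

theorem reflTransGen_canonE_iff_contractE (huv : u ≠ v) {a b : α} (ha : a ≠ v)
    (hb : b ≠ v) :
    Relation.ReflTransGen (canonE E u v) a b ↔ Relation.ReflTransGen (contractE E u v) a b := by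
  classical
  refine ⟨fun h => ?_, reflTransGen_canonE_of_contractE E⟩
  simpa [Function.update_of_ne ha, Function.update_of_ne hb] using
    reflTransGen_contractE_of_canonE E huv h

theorem reflTransGen_contractE_of_canonE_right (huv : u ≠ v) {a : α} (ha : a ≠ v)
    (h : Relation.ReflTransGen (canonE E u v) a v) :
    Relation.ReflTransGen (contractE E u v) a u := by
  classical
  simpa [Function.update_of_ne ha] using reflTransGen_contractE_of_canonE E huv h

variable {T : α} (hTu : T ≠ u) (hTv : T ≠ v) (hch : ¬ E u T ∧ ¬ E v T)
include hTu hTv hch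

theorem canonE_left_iff_of_not_child {a : α} : canonE E u v a T ↔ a ≠ T ∧ E a T := by
  simp only [canonE, hTu, hTv, hch, false_and, and_false, or_false]

theorem contractE_left_iff_of_not_child {a : α} : contractE E u v a T ↔ a ≠ T ∧ E a T := by
  constructor
  · rintro ⟨-, -, haT, ⟨-, h | h⟩ | ⟨h, -⟩ | ⟨-, -, h⟩⟩
    exacts [absurd h hch.1, absurd h hch.2, absurd h hTu, ⟨haT, h⟩]
  · rintro ⟨haT, h⟩
    have hau : a ≠ u := by rintro rfl; exact hch.1 h
    have hav : a ≠ v := by rintro rfl; exact hch.2 h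
    exact ⟨hav, hTv, haT, Or.inr (Or.inr ⟨hau, hTu, h⟩)⟩

theorem parents_canonE_eq_parents_contractE :
    parents (canonE E u v) T = parents (contractE E u v) T := by
  ext a
  exact (canonE_left_iff_of_not_child E hTu hTv hch).trans
    (contractE_left_iff_of_not_child E hTu hTv hch).symm

end Contraction

theorem contraction_nonchild_vertex_general {α : Type*}
    (E : α → α → Prop) (u v : α) (huv : u ≠ v)
    (T : α) (hTu : T ≠ u) (hTv : T ≠ v) (hch : ¬ E u T ∧ ¬ E v T) :
    parents (canonE E u v) T = parents (contractE E u v) T ∧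
      ndesc (canonE E u v) T \ {u, v}
        = {w | w ≠ v ∧ ¬ Relation.ReflTransGen (contractE E u v) T w} \ {u} ∧
      (({u, v} : Set α) ⊆ ndesc (canonE E u v) T ↔
        ¬ Relation.ReflTransGen (contractE E u v) T u) := by
  have hreach {w : α} (hw : w ≠ v) := reflTransGen_canonE_iff_contractE E huv hTv hw
  refine ⟨parents_canonE_eq_parents_contractE E hTu hTv hch, ?_, ?_⟩
  · ext w
    simp only [ndesc, Set.mem_sdiff, Set.mem_ofPred_eq, Set.mem_insert_iff,
      Set.mem_singleton_iff, not_or]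
    constructor
    · rintro ⟨hw, hwu, hwv⟩
      exact ⟨⟨hwv, (hreach hwv).not.mp hw⟩, hwu⟩
    · rintro ⟨⟨hwv, hw⟩, hwu⟩
      exact ⟨(hreach hwv).not.mpr hw, hwu, hwv⟩
  · simp only [Set.insert_subset_iff, Set.singleton_subset_iff, ndesc, Set.mem_ofPred_eq]
    exact ⟨fun h => (hreach huv).not.mp h.1, fun h =>
      ⟨(hreach huv).not.mpr h, mt (reflTransGen_contractE_of_canonE_right E huv hTv) h⟩⟩

theorem contraction_nonchild_vertex {α : Type*} [Fintype α]
    (E : α → α → Prop) (hG : IsDAG E) (u v : α) (huv : u ≠ v)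
    (hpath : (¬ ∃ w, E u w ∧ Relation.TransGen E w v) ∧
      (¬ ∃ w, E v w ∧ Relation.TransGen E w u))
    (hvu : ¬ E v u)
    (T : α) (hTu : T ≠ u) (hTv : T ≠ v) (hch : ¬ E u T ∧ ¬ E v T) :
    parents (canonE E u v) T = parents (contractE E u v) T ∧
      ndesc (canonE E u v) T \ {u, v}
        = {w | w ≠ v ∧ ¬ Relation.ReflTransGen (contractE E u v) T w} \ {u} ∧
      (({u, v} : Set α) ⊆ ndesc (canonE E u v) T ↔
        ¬ Relation.ReflTransGen (contractE E u v) T u) :=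
  contraction_nonchild_vertex_general E u v huv T hTu hTv hch

end CausalDAGSummary
end

section
/- Let (H,f) be a summary DAG of a DAG G with a fixed complete topological order of V(G), and let G_H be the associated canonical causal DAG. Then for any pairwise disjoint subsets X, Y, Z of V(H): X and Y are d-separated by Z in H if and only if f^{-1}(X) and f^{-1}(Y) are d-separated by f^{-1}(Z) in G_H. -/
namespace CausalDAGSummary

variable {α : Type*}

/-- A trail in a directed graph: a sequence of vertices such that consecutive
vertices are joined by an edge (in one direction or the other), with distinct edges
used along the trail. -/
def IsTrail (E : α → α → Prop) (xs : List α) : Prop :=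
  xs.Chain' (fun a b => E a b ∨ E b a) ∧
    ((xs.zip xs.tail).map (fun p => Sym2.mk p)).Nodup

/-- The vertex at position `i` of the trail `xs` is head-to-head: both its
neighbouring edges along the trail point into it. -/
def HeadToHead (E : α → α → Prop) (xs : List α) (i : ℕ) : Prop :=
  ∃ (_ : 0 < i) (h2 : i + 1 < xs.length),
    E (xs.get ⟨i - 1, by omega⟩) (xs.get ⟨i, by omega⟩) ∧
      E (xs.get ⟨i + 1, h2⟩) (xs.get ⟨i, by omega⟩)

/-- A trail is active given `Z` if every head-to-head vertex of the trail belongs to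
`Z` or has a descendant in `Z`, and every non-head-to-head vertex of the trail does
not belong to `Z`. -/
def ActiveTrail (E : α → α → Prop) (Z : Set α) (xs : List α) : Prop :=
  IsTrail E xs ∧
    ∀ (i : ℕ) (hi : i < xs.length),
      (HeadToHead E xs i →
        ∃ d ∈ Z, Relation.ReflTransGen E (xs.get ⟨i, hi⟩) d) ∧
      (¬ HeadToHead E xs i → xs.get ⟨i, hi⟩ ∉ Z)

/-- `X` and `Y` are d-connected given `Z`: some active trail joins a vertex of `X`
to a vertex of `Y`. -/
def DConnected (E : α → α → Prop) (X Y Z : Set α) : Prop :=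
  ∃ (xs : List α) (hne : xs ≠ []),
    xs.head hne ∈ X ∧ xs.getLast hne ∈ Y ∧ ActiveTrail E Z xs

/-- `X` and `Y` are d-separated by `Z`: every trail between a vertex of `X` and a
vertex of `Y` is blocked given `Z`. -/
def DSeparated (E : α → α → Prop) (X Y Z : Set α) : Prop :=
  ¬ DConnected E X Y Z


/-- The edge relation of the canonical causal DAG `G_H` associated with the summary
DAG `(H, f)` of `G` and the complete topological order on `Fin n` (modelling the
fixed complete topological order of `V(G)`). -/
def canonicalE {n : ℕ} {β : Type*} (E : Fin n → Fin n → Prop)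
    (EH : β → β → Prop) (f : Fin n → β) : Fin n → Fin n → Prop := fun i j =>
  E i j ∨ EH (f i) (f j) ∨ (f i = f j ∧ i < j)

/-!
Work with walks `g 0, …, g m` instead of trails. If `p < q` and `g p` behaves like `g q` towards
`g (q + 1)` and towards `Z`, cutting out `g (p + 1), …, g q` keeps an active walk active: the
junction `g p` becomes a collider only if the walk enters `g p` and also enters `g q` from
`g (q + 1)`, and then the first backward edge after `p` is a collider below `g p`. If edges
between different fibres of a map `π` only depend on the fibres, cutting from a visit of a fibre
to its last visit is such a splice, so a shortest active walk meets each fibre at most once. For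
`π = id` such walks are trails. For `π = f` and the canonical DAG, edges between different blocks
are the edges of `H`, and a vertex has a descendant in `f⁻¹ Z` iff its block has one in `Z`; so
the block-injective active walks of `G_H` are the lifts of the injective active walks of `H`.
-/

open Relation Set

def IsWalk (E : α → α → Prop) (g : ℕ → α) (m : ℕ) : Prop :=
  ∀ i < m, E (g i) (g (i + 1)) ∨ E (g (i + 1)) (g i)

def IsCollider (E : α → α → Prop) (g : ℕ → α) (m i : ℕ) : Prop :=
  0 < i ∧ i < m ∧ E (g (i - 1)) (g i) ∧ E (g (i + 1)) (g i)

def IsActiveWalk (E : α → α → Prop) (Z : Set α) (g : ℕ → α) (m : ℕ) : Prop :=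
  IsWalk E g m ∧ ∀ i ≤ m,
    (IsCollider E g m i → ∃ d ∈ Z, ReflTransGen E (g i) d) ∧
      (¬ IsCollider E g m i → g i ∉ Z)

section WalkList

variable {E : α → α → Prop} {Z : Set α} {g : ℕ → α} {m : ℕ}

abbrev walkList (g : ℕ → α) (m : ℕ) : List α := List.ofFn fun i : Fin (m + 1) => g i

theorem headToHead_walkList_iff {i : ℕ} :
    HeadToHead E (walkList g m) i ↔ IsCollider E g m i := by
  simp only [HeadToHead, IsCollider, List.length_ofFn, List.get_eq_getElem, List.getElem_ofFn]
  exact ⟨fun ⟨h0, hm, h⟩ => ⟨h0, by omega, h⟩, fun ⟨h0, hm, h⟩ => ⟨h0, by omega, h⟩⟩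

theorem isChain_walkList_iff :
    (walkList g m).IsChain (fun a b => E a b ∨ E b a) ↔ IsWalk E g m := by
  simp only [List.isChain_ofFn, IsWalk]
  exact ⟨fun h i hi => h i (by omega), fun h i hi => h i (by omega)⟩

theorem ActiveTrail.isActiveWalk (h : ActiveTrail E Z (walkList g m)) :
    IsActiveWalk E Z g m := by
  refine ⟨isChain_walkList_iff.mp h.1.1, fun i hi => ?_⟩
  have hi' := h.2 i (by simp only [List.length_ofFn]; omega)
  simpa only [headToHead_walkList_iff, List.get_eq_getElem, List.getElem_ofFn] using hi'

theorem IsActiveWalk.activeTrail (h : IsActiveWalk E Z g m) (hinj : InjOn g (Iic m)) :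
    ActiveTrail E Z (walkList g m) := by
  refine ⟨⟨isChain_walkList_iff.mpr h.1, ?_⟩, fun i hi => ?_⟩
  · rw [List.nodup_iff_injective_getElem]
    rintro ⟨i, hi⟩ ⟨j, hj⟩ hij
    simp only [List.length_map, List.length_zip, List.length_tail, List.length_ofFn,
      Nat.add_sub_cancel] at hi hj
    simp only [List.getElem_map, List.getElem_zip, List.getElem_tail, List.getElem_ofFn] at hij
    -- `Sym2.mk p` in `IsTrail` is curried, so `IsTrail` asks for distinct ordered pairs.
    have hpair : (g i, g (i + 1)) = (g j, g (j + 1)) := by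
      rcases Sym2.eq_iff.mp (congrFun hij (g j, g (j + 1))) with ⟨h, -⟩ | ⟨h, -⟩ <;> exact h
    exact Fin.ext (hinj (mem_Iic.mpr (show i ≤ m by omega)) (mem_Iic.mpr (show j ≤ m by omega))
      (Prod.mk.inj hpair).1)
  · simp only [List.length_ofFn] at hi
    simp only [headToHead_walkList_iff, List.get_eq_getElem, List.getElem_ofFn]
    exact h.2 i (by omega)

end WalkList

section DConnected

variable {E : α → α → Prop} {X Y Z : Set α}

theorem DConnected.exists_isActiveWalk (h : DConnected E X Y Z) :
    ∃ m g, IsActiveWalk E Z g m ∧ g 0 ∈ X ∧ g m ∈ Y := by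
  obtain ⟨xs, hne, hX, hY, hact⟩ := h
  have hlen : xs.length - 1 + 1 = xs.length :=
    Nat.succ_pred_eq_of_pos (List.length_pos_iff.mpr hne)
  set g : ℕ → α := fun i => xs.getD i (xs.head hne)
  have hxs : walkList g (xs.length - 1) = xs :=
    List.ext_getElem (by simp only [List.length_ofFn, hlen]) fun i _ hi => by
      simp only [List.getElem_ofFn, g, List.getD_eq_getElem _ _ hi]
  refine ⟨xs.length - 1, g, (hxs ▸ hact).isActiveWalk, ?_, ?_⟩
  · rwa [List.head_eq_getElem, ← List.getD_eq_getElem _ (xs.head hne)] at hX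
  · rwa [List.getLast_eq_getElem, ← List.getD_eq_getElem _ (xs.head hne)] at hY

theorem IsActiveWalk.dConnected {g : ℕ → α} {m : ℕ} (h : IsActiveWalk E Z g m)
    (hinj : InjOn g (Iic m)) (h0 : g 0 ∈ X) (hm : g m ∈ Y) : DConnected E X Y Z :=
  ⟨walkList g m, mt List.ofFn_eq_nil_iff.mp m.succ_ne_zero,
    by simpa only [List.head_ofFn] using h0,
    by simpa only [List.getLast_ofFn, Nat.add_sub_cancel] using hm, h.activeTrail hinj⟩

end DConnected

section Splice

variable {E : α → α → Prop} {Z : Set α} {g : ℕ → α} {m p q i : ℕ}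

theorem IsActiveWalk.exists_reflTransGen_of_inward (h : IsActiveWalk E Z g m) {s t : ℕ}
    (hs : 0 < s) (hst : s ≤ t) (htm : t < m) (hin : E (g (s - 1)) (g s))
    (hout : E (g (t + 1)) (g t)) : ∃ d ∈ Z, ReflTransGen E (g s) d := by
  induction hk : t - s generalizing s with
  | zero => exact (h.2 s (by omega)).1 ⟨hs, by omega, hin, by rwa [show s = t by omega]⟩
  | succ k ih =>
    by_cases hback : E (g (s + 1)) (g s)
    · exact (h.2 s (by omega)).1 ⟨hs, by omega, hin, hback⟩
    · have hfwd := (h.1 s (by omega)).resolve_right hback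
      obtain ⟨d, hd, hsd⟩ := ih (s := s + 1) (by omega) (by omega) hfwd (by omega)
      exact ⟨d, hd, hsd.head hfwd⟩

theorem IsActiveWalk.notMem_zero (h : IsActiveWalk E Z g m) : g 0 ∉ Z :=
  (h.2 0 (Nat.zero_le m)).2 fun hc => hc.1.false

theorem IsActiveWalk.notMem_last (h : IsActiveWalk E Z g m) : g m ∉ Z :=
  (h.2 m le_rfl).2 fun hc => hc.2.1.false

def splice (g : ℕ → α) (p q : ℕ) (i : ℕ) : α := if i ≤ p then g i else g (i + (q - p))

theorem splice_of_le (h : i ≤ p) : splice g p q i = g i := if_pos h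

theorem splice_of_lt (h : p < i) : splice g p q i = g (i + (q - p)) := if_neg (by omega)

theorem isCollider_splice_of_lt (hpq : p < q) (hqm : q ≤ m) (hi : i < p) :
    IsCollider E (splice g p q) (m - (q - p)) i ↔ IsCollider E g m i := by
  simp only [IsCollider, splice_of_le (show i - 1 ≤ p by omega), splice_of_le hi.le,
    splice_of_le (show i + 1 ≤ p by omega)]
  constructor <;> rintro ⟨h0, -, h⟩ <;> exact ⟨h0, by omega, h⟩

theorem isCollider_splice_self (hpq : p < q) (hqm : q ≤ m) :
    IsCollider E (splice g p q) (m - (q - p)) p ↔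
      0 < p ∧ q < m ∧ E (g (p - 1)) (g p) ∧ E (g (q + 1)) (g p) := by
  simp only [IsCollider, splice_of_le (show p - 1 ≤ p by omega), splice_of_le le_rfl,
    splice_of_lt (show p < p + 1 by omega), show p + 1 + (q - p) = q + 1 by omega]
  constructor <;> rintro ⟨h0, hp, h⟩ <;> exact ⟨h0, by omega, h⟩

theorem isCollider_splice_of_gt (hpq : p < q) (hqm : q ≤ m) (hi : p < i)
    (hnext : q < m → (E (g p) (g (q + 1)) ↔ E (g q) (g (q + 1)))) :
    IsCollider E (splice g p q) (m - (q - p)) i ↔ IsCollider E g m (i + (q - p)) := by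
  have hprev : i + 1 ≤ m - (q - p) →
      (E (splice g p q (i - 1)) (g (i + (q - p))) ↔
        E (g (i + (q - p) - 1)) (g (i + (q - p)))) := by
    intro him
    rcases (show i = p + 1 ∨ p + 1 < i by omega) with rfl | hi'
    · rw [splice_of_le (by omega), show p + 1 + (q - p) = q + 1 by omega, Nat.add_sub_cancel]
      exact hnext (by omega)
    · rw [splice_of_lt (by omega), show i - 1 + (q - p) = i + (q - p) - 1 by omega]
  simp only [IsCollider, splice_of_lt hi, splice_of_lt (show p < i + 1 by omega),
    show i + 1 + (q - p) = i + (q - p) + 1 by omega]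
  constructor
  · rintro ⟨-, him, hl, hr⟩
    exact ⟨by omega, by omega, (hprev (by omega)).mp hl, hr⟩
  · rintro ⟨-, him, hl, hr⟩
    exact ⟨by omega, by omega, (hprev (by omega)).mpr hl, hr⟩

theorem IsActiveWalk.splice (h : IsActiveWalk E Z g m) (hpq : p < q) (hqm : q ≤ m)
    (hZ : g q ∉ Z → g p ∉ Z)
    (hnext : q < m → (E (g (q + 1)) (g p) ↔ E (g (q + 1)) (g q)) ∧
      (E (g p) (g (q + 1)) ↔ E (g q) (g (q + 1)))) :
    IsActiveWalk E Z (splice g p q) (m - (q - p)) := by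
  refine ⟨fun i hi => ?_, fun i hi => ?_⟩
  · rcases lt_trichotomy i p with hip | rfl | hpi
    · rw [splice_of_le hip.le, splice_of_le hip]
      exact h.1 i (by omega)
    · rw [splice_of_le le_rfl, splice_of_lt (Nat.lt_succ_self i),
        show i + 1 + (q - i) = q + 1 by omega, (hnext (by omega)).1, (hnext (by omega)).2]
      exact h.1 q (by omega)
    · rw [splice_of_lt hpi, splice_of_lt (by omega),
        show i + 1 + (q - p) = i + (q - p) + 1 by omega]
      exact h.1 _ (by omega)
  rcases lt_trichotomy i p with hip | rfl | hpi
  · rw [isCollider_splice_of_lt hpq hqm hip, splice_of_le hip.le]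
    exact h.2 i (by omega)
  · rw [isCollider_splice_self hpq hqm, splice_of_le le_rfl]
    refine ⟨fun ⟨hi0, hqm', hin, hout⟩ => ?_, fun hnc => ?_⟩
    · exact h.exists_reflTransGen_of_inward hi0 hpq.le hqm' hin ((hnext hqm').1.mp hout)
    · rcases Nat.eq_zero_or_pos i with rfl | hi0
      · exact h.notMem_zero
      rcases hqm.eq_or_lt with rfl | hqm'
      · exact hZ h.notMem_last
      by_cases hin : E (g (i - 1)) (g i)
      · exact hZ <| (h.2 q hqm).2 fun hc => hnc ⟨hi0, hqm', hin, (hnext hqm').1.mpr hc.2.2.2⟩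
      · exact (h.2 i (by omega)).2 fun hc => hin hc.2.2.1
  · rw [isCollider_splice_of_gt hpq hqm hpi fun hqm' => (hnext hqm').2, splice_of_lt hpi]
    exact h.2 _ (by omega)

end Splice

section FibreInjective

variable {γ : Type*} {E : α → α → Prop} {π : α → γ} {X Y Z : Set γ}

def EdgesDependOnFibres (E : α → α → Prop) (π : α → γ) : Prop :=
  ∀ a b c, π a = π b → π c ≠ π b → (E c a ↔ E c b) ∧ (E a c ↔ E b c)

theorem edgesDependOnFibres_id : EdgesDependOnFibres E id :=
  fun _ _ _ hab _ => by obtain rfl : _ = _ := hab; exact ⟨Iff.rfl, Iff.rfl⟩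

theorem IsActiveWalk.exists_injOn_comp (hE : EdgesDependOnFibres E π)
    {g : ℕ → α} {m : ℕ} (h : IsActiveWalk E (π ⁻¹' Z) g m) (h0 : π (g 0) ∈ X)
    (hm : π (g m) ∈ Y) :
    ∃ m g, IsActiveWalk E (π ⁻¹' Z) g m ∧ InjOn (π ∘ g) (Iic m) ∧ π (g 0) ∈ X ∧ π (g m) ∈ Y := by
  induction m using Nat.strong_induction_on generalizing g with
  | _ m ih =>
  classical
  by_cases hinj : InjOn (π ∘ g) (Iic m)
  · exact ⟨m, g, h, hinj, h0, hm⟩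
  obtain ⟨p, q, hpq, hqm, hpq_eq⟩ : ∃ p q, p < q ∧ q ≤ m ∧ π (g q) = π (g p) := by
    simp only [InjOn, mem_Iic, Function.comp_apply, not_forall] at hinj
    obtain ⟨a, ha, b, hb, hab, hne⟩ := hinj
    rcases Nat.lt_or_gt_of_ne hne with hlt | hlt
    exacts [⟨a, b, hlt, hb, hab.symm⟩, ⟨b, a, hlt, ha, hab⟩]
  -- Cut up to the last visit `r` of the fibre of `g p`, so that the edge at `r` leaves the fibre.
  set r := Nat.findGreatest (fun j => π (g j) = π (g p)) m
  have hr : π (g r) = π (g p) :=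
    Nat.findGreatest_spec (P := fun j => π (g j) = π (g p)) hqm hpq_eq
  have hqr : q ≤ r := Nat.le_findGreatest (P := fun j => π (g j) = π (g p)) hqm hpq_eq
  have hrm : r ≤ m := Nat.findGreatest_le m
  have hnext : r < m → π (g (r + 1)) ≠ π (g r) := fun hrm' heq =>
    Nat.findGreatest_is_greatest (Nat.lt_succ_self r) hrm' (heq.trans hr)
  have hsplice := h.splice (lt_of_lt_of_le hpq hqr) hrm
    (by simp only [mem_preimage, hr, imp_self])
    fun hrm' => hE _ _ _ hr.symm (hnext hrm')
  refine ih _ (by omega) hsplice (by rwa [splice_of_le (Nat.zero_le p)]) ?_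
  rcases hrm.eq_or_lt with hrm' | hrm'
  · rwa [splice_of_le (by omega), show m - (r - p) = p by omega, ← hr, hrm']
  · rwa [splice_of_lt (by omega), Nat.sub_add_cancel (by omega)]

theorem DConnected.exists_isActiveWalk_injOn_comp (hE : EdgesDependOnFibres E π)
    (h : DConnected E (π ⁻¹' X) (π ⁻¹' Y) (π ⁻¹' Z)) :
    ∃ m g, IsActiveWalk E (π ⁻¹' Z) g m ∧ InjOn (π ∘ g) (Iic m) ∧ π (g 0) ∈ X ∧ π (g m) ∈ Y :=
  let ⟨_, _, hg, h0, hm⟩ := h.exists_isActiveWalk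
  hg.exists_injOn_comp hE h0 hm

theorem DConnected.exists_isActiveWalk_injOn {X Y Z : Set α} (h : DConnected E X Y Z) :
    ∃ m g, IsActiveWalk E Z g m ∧ InjOn g (Iic m) ∧ g 0 ∈ X ∧ g m ∈ Y :=
  h.exists_isActiveWalk_injOn_comp (π := id) edgesDependOnFibres_id

end FibreInjective

section Canonical

variable {n : ℕ} {β : Type*} {E : Fin n → Fin n → Prop} {EH : β → β → Prop} {f : Fin n → β}

theorem canonicalE_of_apply {x y : Fin n} (h : EH (f x) (f y)) : canonicalE E EH f x y :=
  Or.inr (Or.inl h)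

theorem eq_or_apply_of_canonicalE (hsummary : ∀ i j, E i j → f i = f j ∨ EH (f i) (f j))
    {x y : Fin n} (h : canonicalE E EH f x y) : f x = f y ∨ EH (f x) (f y) := by
  rcases h with h | h | h
  exacts [hsummary x y h, Or.inr h, Or.inl h.1]

theorem canonicalE_iff_of_ne (hsummary : ∀ i j, E i j → f i = f j ∨ EH (f i) (f j))
    {x y : Fin n} (hne : f x ≠ f y) : canonicalE E EH f x y ↔ EH (f x) (f y) :=
  ⟨fun h => (eq_or_apply_of_canonicalE hsummary h).resolve_left hne, canonicalE_of_apply⟩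

theorem edgesDependOnFibres_canonicalE (hsummary : ∀ i j, E i j → f i = f j ∨ EH (f i) (f j)) :
    EdgesDependOnFibres (canonicalE E EH f) f := fun a b c hab hcb => by
  rw [canonicalE_iff_of_ne hsummary (hab ▸ hcb), canonicalE_iff_of_ne hsummary hcb,
    canonicalE_iff_of_ne hsummary (hab ▸ hcb).symm, canonicalE_iff_of_ne hsummary hcb.symm, hab]
  exact ⟨Iff.rfl, Iff.rfl⟩

theorem exists_reflTransGen_canonicalE_iff (hf : Function.Surjective f)
    (hsummary : ∀ i j, E i j → f i = f j ∨ EH (f i) (f j)) {Z : Set β} {x : Fin n} :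
    (∃ d ∈ f ⁻¹' Z, ReflTransGen (canonicalE E EH f) x d) ↔ ∃ z ∈ Z, ReflTransGen EH (f x) z := by
  constructor
  · rintro ⟨d, hd, hxd⟩
    refine ⟨f d, hd, hxd.lift' f fun a b hab => show ReflTransGen EH (f a) (f b) from ?_⟩
    rcases eq_or_apply_of_canonicalE hsummary hab with heq | hab
    exacts [heq ▸ ReflTransGen.refl (r := EH) (a := f a), ReflTransGen.single hab]
  · rintro ⟨z, hz, hxz⟩
    rcases hxz.cases_head with hxz | ⟨c, hxc, hcz⟩
    · exact ⟨x, by rwa [mem_preimage, hxz], ReflTransGen.refl⟩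
    have hsec : ∀ b, f (Function.surjInv hf b) = b := Function.surjInv_eq hf
    refine ⟨Function.surjInv hf z, by rwa [mem_preimage, hsec], ReflTransGen.head
      (canonicalE_of_apply (by rwa [hsec])) (hcz.lift _ fun a b hab => ?_)⟩
    exact canonicalE_of_apply (by rwa [hsec, hsec])

variable {g : ℕ → Fin n} {m : ℕ}

theorem isWalk_canonicalE_iff (hsummary : ∀ i j, E i j → f i = f j ∨ EH (f i) (f j))
    (hg : ∀ i < m, f (g i) ≠ f (g (i + 1))) :
    IsWalk (canonicalE E EH f) g m ↔ IsWalk EH (f ∘ g) m :=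
  forall₂_congr fun i hi => by
    rw [canonicalE_iff_of_ne hsummary (hg i hi), canonicalE_iff_of_ne hsummary (hg i hi).symm,
      Function.comp_apply, Function.comp_apply]

theorem isCollider_canonicalE_iff (hsummary : ∀ i j, E i j → f i = f j ∨ EH (f i) (f j))
    (hg : ∀ i < m, f (g i) ≠ f (g (i + 1))) {i : ℕ} :
    IsCollider (canonicalE E EH f) g m i ↔ IsCollider EH (f ∘ g) m i := by
  simp only [IsCollider, Function.comp_apply]
  refine and_congr_right fun hi0 => and_congr_right fun him => ?_
  have hprev := hg (i - 1) (by omega)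
  rw [Nat.sub_add_cancel hi0] at hprev
  rw [canonicalE_iff_of_ne hsummary hprev, canonicalE_iff_of_ne hsummary (hg i him).symm]

theorem isActiveWalk_canonicalE_iff (hf : Function.Surjective f)
    (hsummary : ∀ i j, E i j → f i = f j ∨ EH (f i) (f j)) {Z : Set β}
    (hg : ∀ i < m, f (g i) ≠ f (g (i + 1))) :
    IsActiveWalk (canonicalE E EH f) (f ⁻¹' Z) g m ↔ IsActiveWalk EH Z (f ∘ g) m := by
  simp only [IsActiveWalk, isWalk_canonicalE_iff hsummary hg, isCollider_canonicalE_iff hsummary hg,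
    exists_reflTransGen_canonicalE_iff hf hsummary, Function.comp_apply]
  rfl

theorem dConnected_canonicalE_iff (hf : Function.Surjective f)
    (hsummary : ∀ i j, E i j → f i = f j ∨ EH (f i) (f j)) {X Y Z : Set β} :
    DConnected (canonicalE E EH f) (f ⁻¹' X) (f ⁻¹' Y) (f ⁻¹' Z) ↔ DConnected EH X Y Z := by
  have hne_succ : ∀ {g : ℕ → β} {m : ℕ}, InjOn g (Iic m) → ∀ i < m, g i ≠ g (i + 1) :=
    fun hinj i hi heq => by
      have := hinj (mem_Iic.mpr (by omega)) (mem_Iic.mpr (by omega)) heq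
      omega
  constructor
  · intro h
    obtain ⟨m, g, hg, hinj, h0, hm⟩ :=
      h.exists_isActiveWalk_injOn_comp (edgesDependOnFibres_canonicalE hsummary)
    exact ((isActiveWalk_canonicalE_iff hf hsummary (hne_succ hinj)).mp hg).dConnected hinj h0 hm
  · intro h
    obtain ⟨m, g, hg, hinj, h0, hm⟩ := h.exists_isActiveWalk_injOn
    have hfg : f ∘ Function.surjInv hf ∘ g = g := funext fun i => Function.surjInv_eq hf (g i)
    rw [← hfg] at hg hinj h0 hm
    exact ((isActiveWalk_canonicalE_iff hf hsummary (hne_succ hinj)).mpr hg).dConnected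
      hinj.of_comp h0 hm

end Canonical

theorem dsep_summary_iff_dsep_canonical_general {n : ℕ} {β : Type*}
    (E : Fin n → Fin n → Prop)
    (EH : β → β → Prop)
    (f : Fin n → β) (hf : Function.Surjective f)
    (hsummary : ∀ i j, E i j → f i = f j ∨ EH (f i) (f j)) :
    ∀ X Y Z : Set β, Disjoint X Y → Disjoint X Z → Disjoint Y Z →
      (DSeparated EH X Y Z ↔
        DSeparated (canonicalE E EH f) (f ⁻¹' X) (f ⁻¹' Y) (f ⁻¹' Z)) :=
  fun _ _ _ _ _ _ => not_congr (dConnected_canonicalE_iff hf hsummary).symm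

theorem dsep_summary_iff_dsep_canonical {n : ℕ} {β : Type*} [Fintype β]
    (E : Fin n → Fin n → Prop) (htopo : ∀ i j, E i j → i < j)
    (EH : β → β → Prop) (hH : IsDAG EH)
    (f : Fin n → β) (hf : Function.Surjective f)
    (hsummary : ∀ i j, E i j → f i = f j ∨ EH (f i) (f j)) :
    ∀ X Y Z : Set β, Disjoint X Y → Disjoint X Z → Disjoint Y Z →
      (DSeparated EH X Y Z ↔
        DSeparated (canonicalE E EH f) (f ⁻¹' X) (f ⁻¹' Y) (f ⁻¹' Z)) :=
  dsep_summary_iff_dsep_canonical_general E EH f hf hsummary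

end CausalDAGSummary
end
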